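/- arXiv:1310.5103 — 3 statements merged into one kernel-verified Lean document; each statement's English description precedes it below -/
import Mathlib

section
/- Two quasi-concave hit curves h₁, h₂ with parameters (α₁, β₁) and (α₂, β₂) and the same prevalence π have equal AUC if and only if (β₁ − π)α₁ = (β₂ − π)α₂. -/
/-!
Both pieces of the hit curve take the value `α * β` at `t = α`, so the curve is continuous and its
integral over `[0, 1]` splits at `α` into integrals of two affine functions; these add up to
`(π + (β - π) * α) / 2`. The AUC is thus an affine function of `(β - π) * α` with nonzero slope
`1 / (2 * π * (1 - π))`, hence injective in it.
-/

open Set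

noncomputable def quasiConcaveHit (π α β : ℝ) (t : ℝ) : ℝ :=
  if t ≤ α then β * t else (π - α * β) / (1 - α) * (t - α) + α * β

theorem continuous_quasiConcaveHit (π α β : ℝ) : Continuous (quasiConcaveHit π α β) :=
  Continuous.if_le (by fun_prop) (by fun_prop) continuous_id continuous_const
    fun t ht => by rw [ht]; ring

theorem integral_quasiConcaveHit {π α β : ℝ} (h0 : 0 ≤ α) (h1 : α ≤ 1) :
    ∫ t in (0:ℝ)..1, quasiConcaveHit π α β t = (π + (β - π) * α) / 2 := by
  have hleft : ∫ t in (0:ℝ)..α, quasiConcaveHit π α β t = β * α ^ 2 / 2 := by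
    have hcongr : EqOn (quasiConcaveHit π α β) (fun t => β * t) (uIcc 0 α) := fun t ht => by
      rw [uIcc_of_le h0] at ht
      simp [quasiConcaveHit, ht.2]
    rw [intervalIntegral.integral_congr hcongr, intervalIntegral.integral_const_mul, integral_id]
    ring
  have hright : ∫ t in α..1, quasiConcaveHit π α β t = (1 - α) * (π + α * β) / 2 := by
    set s := (π - α * β) / (1 - α)
    have hcongr : EqOn (quasiConcaveHit π α β) (fun t => s * (t - α) + α * β) (uIcc α 1) :=
      fun t ht => by
        rw [uIcc_of_le h1] at ht
        rcases ht.1.eq_or_lt with rfl | hlt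
        · simp [quasiConcaveHit, mul_comm]
        · simp [quasiConcaveHit, not_le.2 hlt, s]
    rw [intervalIntegral.integral_congr hcongr]
    rcases h1.eq_or_lt with rfl | hlt
    · simp
    · have hlin : Continuous fun t => s * (t - α) := by fun_prop
      rw [intervalIntegral.integral_add (hlin.intervalIntegrable _ _) intervalIntegrable_const,
        intervalIntegral.integral_const_mul, intervalIntegral.integral_comp_sub_right fun x => x]
      have hs : s * (1 - α) = π - α * β := div_mul_cancel₀ _ (sub_ne_zero.2 hlt.ne')
      simp only [sub_self, integral_id, intervalIntegral.integral_const, smul_eq_mul]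
      linear_combination (1 - α) / 2 * hs
  rw [← intervalIntegral.integral_add_adjacent_intervals
    ((continuous_quasiConcaveHit π α β).intervalIntegrable 0 α)
    ((continuous_quasiConcaveHit π α β).intervalIntegrable α 1), hleft, hright]
  ring

theorem le_one_of_le_div_of_le {π α β : ℝ} (hπ : 0 < π) (hβ : π ≤ β) (hα : α ≤ π / β) : α ≤ 1 :=
  hα.trans ((div_le_one (hπ.trans_le hβ)).2 hβ)

/-- Two quasi-concave hit curves with parameters `(α₁, β₁)`, `(α₂, β₂)` and the
same prevalence `π` have equal AUC iff `(β₁ − π)α₁ = (β₂ − π)α₂`. -/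
theorem stmt8 (π α₁ β₁ α₂ β₂ : ℝ) (hπ : π ∈ Set.Ioo (0:ℝ) 1)
    (hβ₁ : π ≤ β₁ ∧ β₁ ≤ 1) (hα₁ : 0 < α₁ ∧ α₁ ≤ π / β₁)
    (hβ₂ : π ≤ β₂ ∧ β₂ ≤ 1) (hα₂ : 0 < α₂ ∧ α₂ ≤ π / β₂)
    (h₁ h₂ : ℝ → ℝ)
    (hdef₁ : ∀ t : ℝ, h₁ t = if t ≤ α₁ then β₁ * t
      else ((π - α₁ * β₁) / (1 - α₁)) * (t - α₁) + α₁ * β₁)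
    (hdef₂ : ∀ t : ℝ, h₂ t = if t ≤ α₂ then β₂ * t
      else ((π - α₂ * β₂) / (1 - α₂)) * (t - α₂) + α₂ * β₂) :
    (1 / (π * (1 - π))) * ((∫ t in (0:ℝ)..1, h₁ t) - π ^ 2 / 2)
      = (1 / (π * (1 - π))) * ((∫ t in (0:ℝ)..1, h₂ t) - π ^ 2 / 2)
    ↔ (β₁ - π) * α₁ = (β₂ - π) * α₂ := by
  obtain ⟨hπ0, hπ1⟩ := hπ
  obtain rfl : h₁ = quasiConcaveHit π α₁ β₁ := funext hdef₁
  obtain rfl : h₂ = quasiConcaveHit π α₂ β₂ := funext hdef₂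
  rw [integral_quasiConcaveHit hα₁.1.le (le_one_of_le_div_of_le hπ0 hβ₁.1 hα₁.2),
    integral_quasiConcaveHit hα₂.1.le (le_one_of_le_div_of_le hπ0 hβ₂.1 hα₂.2),
    mul_right_inj' (one_div_pos.2 (mul_pos hπ0 (sub_pos.2 hπ1))).ne']
  constructor <;> intro h <;> linarith
end

section
/- For a quasi-concave hit curve h with parameters (α, β), α ∈ (0, π/β], β ∈ [π,1], the exact average precision AP(h) = (1/π)·∫₀¹ (h(t)/t)·h'(t) dt equals (1/π)·[β²α + (π − αβ)²/(1 − α) − ((π − αβ)/(1 − α))·((β − π)α/(1 − α))·log α]. -/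
open MeasureTheory Set intervalIntegral

/-!
On `(0, α)` the integrand `(h t / t) · h' t` is the constant `β²`. On `(α, 1)`, writing
`c = (π − αβ)/(1 − α)` for the slope of the second piece, `h t / t = c + α(β − c)/t`, so the
integrand is `c² + cα(β − c)/t`, whose integral over `[α, 1]` is `c²(1 − α) − cα(β − c) log α`.
Since `β − c = (β − π)/(1 − α)`, the sum of the two pieces is the stated closed form.
-/

theorem intervalIntegral.integral_add_adjacent_of_eqOn_uIoo {E : Type*} [NormedAddCommGroup E]
    [NormedSpace ℝ E] {μ : Measure ℝ} [NullSingletonClass μ] {f g₁ g₂ : ℝ → E} {a b c : ℝ}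
    (h₁ : EqOn f g₁ (uIoo a b)) (h₂ : EqOn f g₂ (uIoo b c))
    (hg₁ : IntervalIntegrable g₁ μ a b) (hg₂ : IntervalIntegrable g₂ μ b c) :
    ∫ x in a..c, f x ∂μ = (∫ x in a..b, g₁ x ∂μ) + ∫ x in b..c, g₂ x ∂μ := by
  rw [← integral_add_adjacent_intervals ((intervalIntegrable_congr_uIoo h₁).mpr hg₁)
    ((intervalIntegrable_congr_uIoo h₂).mpr hg₂), integral_congr_uIoo h₁, integral_congr_uIoo h₂]

theorem intervalIntegrable_mul_inv {a b : ℝ} (ha : 0 < a) (hb : 0 < b) (B : ℝ) :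
    IntervalIntegrable (fun t : ℝ => B * t⁻¹) volume a b :=
  (intervalIntegral.intervalIntegrable_inv
    (fun _ hx => (lt_min ha hb |>.trans_le hx.1).ne') continuousOn_id).const_mul B

theorem integral_const_add_mul_inv {a b : ℝ} (ha : 0 < a) (hb : 0 < b) (A B : ℝ) :
    ∫ t in a..b, (A + B * t⁻¹) = A * (b - a) + B * Real.log (b / a) := by
  rw [integral_add intervalIntegrable_const (intervalIntegrable_mul_inv ha hb B),
    intervalIntegral.integral_const_mul, integral_inv_of_pos ha hb,
    intervalIntegral.integral_const, smul_eq_mul, mul_comm]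

section QuasiConcaveHitCurve

variable {α β c : ℝ} {h h' : ℝ → ℝ}

theorem div_mul_deriv_eq_of_lt
    (hdef : ∀ t : ℝ, h t = if t ≤ α then β * t else c * (t - α) + α * β)
    (hd : ∀ t : ℝ, h' t = if t < α then β else c) {t : ℝ} (ht : t ∈ Ioo 0 α) :
    h t / t * h' t = β ^ 2 := by
  rw [hdef, hd, if_pos ht.2.le, if_pos ht.2]
  field_simp [ht.1.ne']

theorem div_mul_deriv_eq_of_gt
    (hdef : ∀ t : ℝ, h t = if t ≤ α then β * t else c * (t - α) + α * β)
    (hd : ∀ t : ℝ, h' t = if t < α then β else c) (hα : 0 < α) {t : ℝ} (ht : α < t) :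
    h t / t * h' t = c ^ 2 + c * α * (β - c) * t⁻¹ := by
  rw [hdef, hd, if_neg ht.not_ge, if_neg ht.not_gt]
  field_simp [(hα.trans ht).ne']
  ring

end QuasiConcaveHitCurve

theorem stmt10_general (π α β : ℝ)
    (hα : 0 < α ∧ α ≤ π / β) (hα1 : α < 1)
    (h h' : ℝ → ℝ)
    (hdef : ∀ t : ℝ, h t = if t ≤ α then β * t
      else ((π - α * β) / (1 - α)) * (t - α) + α * β)
    (hd : ∀ t : ℝ, h' t = if t < α then β else (π - α * β) / (1 - α)) :
    (1 / π) * ∫ t in (0:ℝ)..1, (h t / t) * h' t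
      = (1 / π) * (β ^ 2 * α + (π - α * β) ^ 2 / (1 - α)
          - ((π - α * β) / (1 - α)) * ((β - π) * α / (1 - α)) * Real.log α) := by
  set c := (π - α * β) / (1 - α) with hc
  have hsplit := integral_add_adjacent_of_eqOn_uIoo
    (fun t ht => div_mul_deriv_eq_of_lt hdef hd (by rwa [uIoo_of_le hα.1.le] at ht))
    (fun t ht => div_mul_deriv_eq_of_gt hdef hd hα.1 (by rw [uIoo_of_le hα1.le] at ht; exact ht.1))
    (intervalIntegrable_const (μ := volume) (c := β ^ 2))
    (intervalIntegrable_const.add (intervalIntegrable_mul_inv hα.1 one_pos (c * α * (β - c))))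
  rw [hsplit, intervalIntegral.integral_const, integral_const_add_mul_inv hα.1 one_pos,
    one_div α, Real.log_inv, hc]
  field_simp [(sub_pos.2 hα1).ne']
  ring

/-- Exact average precision of the quasi-concave hit curve:
`AP = (1/π)·[β²α + (π − αβ)²/(1 − α) − ((π − αβ)/(1 − α))·((β − π)α/(1 − α))·log α]`. -/
theorem stmt10 (π α β : ℝ) (hπ : π ∈ Set.Ioo (0:ℝ) 1)
    (hβ : π ≤ β ∧ β ≤ 1) (hα : 0 < α ∧ α ≤ π / β) (hα1 : α < 1)
    (h h' : ℝ → ℝ)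
    (hdef : ∀ t : ℝ, h t = if t ≤ α then β * t
      else ((π - α * β) / (1 - α)) * (t - α) + α * β)
    (hd : ∀ t : ℝ, h' t = if t < α then β else (π - α * β) / (1 - α)) :
    (1 / π) * ∫ t in (0:ℝ)..1, (h t / t) * h' t
      = (1 / π) * (β ^ 2 * α + (π - α * β) ^ 2 / (1 - α)
          - ((π - α * β) / (1 - α)) * ((β - π) * α / (1 - α)) * Real.log α) :=
  stmt10_general π α β hα hα1 h h' hdef hd
end

section
/- Define the rescaled metrics ÃP = (AP − π)/(1 − π) and ÃUC = 2·AUC − 1. For a quasi-concave hit curve with parameters (α, β), using the approximation AP ≈ (β/π)·(β−π)α + π and the exact AUC = ((β−π)α)/(2π(1−π)) + 1/2, one has ÃP = β · ÃUC. -/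
theorem stmt12_general (π α β AP AUC : ℝ)
    (hAP : AP = (β / π) * ((β - π) * α) + π)
    (hAUC : AUC = ((β - π) * α) / (2 * π * (1 - π)) + 1 / 2) :
    (AP - π) / (1 - π) = β * (2 * AUC - 1) := by
  subst hAP hAUC
  -- Both sides are `β (β - π) α π⁻¹ (1 - π)⁻¹`; `ring` needs the inverse of the product split.
  rw [div_eq_mul_inv _ (2 * π * (1 - π)), mul_inv, mul_inv]
  ring

/-- With `AP = (β/π)(β−π)α + π` and `AUC = ((β−π)α)/(2π(1−π)) + 1/2`, the
rescaled metrics satisfy `ÃP = β · ÃUC`. -/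
theorem stmt12 (π α β AP AUC : ℝ) (hπ : π ∈ Set.Ioo (0:ℝ) 1)
    (hβ : π ≤ β ∧ β ≤ 1) (hα : 0 < α ∧ α ≤ π / β)
    (hAP : AP = (β / π) * ((β - π) * α) + π)
    (hAUC : AUC = ((β - π) * α) / (2 * π * (1 - π)) + 1 / 2) :
    (AP - π) / (1 - π) = β * (2 * AUC - 1) :=
  stmt12_general π α β AP AUC hAP hAUC
end
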